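/- arXiv:2101.07079 — 6 statements merged into one kernel-verified Lean document; each statement's English description precedes it below -/
import Mathlib

section
/- Pentagon identity for elementary wall-crossing transformations (equation (pentagon) of the paper): for all γ, γ' ∈ ℤ² with ⟨γ',γ⟩ = 1, the automorphisms of K = ℂ(x,y) satisfy 𝒦_γ ∘ 𝒦_{γ'} = 𝒦_{γ'} ∘ 𝒦_{γ+γ'} ∘ 𝒦_γ. -/
/-! Both sides are `ℂ`-algebra maps out of `K`, so it suffices to compare them on the monomials
`z^μ`. Write `A = 1 + z^γ`, `B = 1 + z^{γ'}` and `D = 1 + z^{γ'} + z^{γ+γ'}`. Since `⟨γ',γ⟩ = 1`,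
`𝒦_γ` sends `B` to `D`, while `𝒦_{γ'}` sends `1 + z^{γ+γ'}` to `D/B` and
`1 + z^γ/(1 + z^{γ+γ'})` to `AB/D` (this is where `D + z^γ = AB` enters). Tracking these factors,
both sides send `z^μ` to `z^μ A^⟨μ,γ⟩ D^⟨μ,γ'⟩`. -/

open MvPolynomial

noncomputable section

/-- `K = ℂ(x,y)`, the field of rational functions in two variables over `ℂ`. -/
abbrev K : Type := FractionRing (MvPolynomial (Fin 2) ℂ)

/-- The rational function `x`. -/
noncomputable def xx : K := algebraMap (MvPolynomial (Fin 2) ℂ) K (X 0)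

/-- The rational function `y`. -/
noncomputable def yy : K := algebraMap (MvPolynomial (Fin 2) ℂ) K (X 1)

/-- `z^μ = x^m y^n` for `μ = (m,n) ∈ ℤ²`. -/
noncomputable def zmon (μ : ℤ × ℤ) : K := xx ^ μ.1 * yy ^ μ.2

/-- `⟨μ,γ⟩ = m b − n a` for `μ = (m,n)`, `γ = (a,b)`. -/
def pairing (μ γ : ℤ × ℤ) : ℤ := μ.1 * γ.2 - μ.2 * γ.1

/-- `Φ` is the wall-crossing transformation `𝒦_{γ,d}`: the `ℂ`-algebra automorphism of `K`
satisfying `𝒦_{γ,d}(z^μ) = z^μ (1+z^γ)^{d⟨μ,γ⟩}` for all `μ ∈ ℤ²`. -/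
def IsWallCrossing (d : ℤ) (γ : ℤ × ℤ) (Φ : K ≃ₐ[ℂ] K) : Prop :=
  ∀ μ : ℤ × ℤ, Φ (zmon μ) = zmon μ * (1 + zmon γ) ^ (d * pairing μ γ)

lemma xx_ne_zero : xx ≠ 0 :=
  (map_ne_zero_iff _ (IsFractionRing.injective _ K)).mpr (X_ne_zero 0)

lemma yy_ne_zero : yy ≠ 0 :=
  (map_ne_zero_iff _ (IsFractionRing.injective _ K)).mpr (X_ne_zero 1)

lemma zmon_ne_zero (μ : ℤ × ℤ) : zmon μ ≠ 0 :=
  mul_ne_zero (zpow_ne_zero _ xx_ne_zero) (zpow_ne_zero _ yy_ne_zero)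

lemma zmon_add (μ ν : ℤ × ℤ) : zmon (μ + ν) = zmon μ * zmon ν := by
  simp only [zmon, Prod.fst_add, Prod.snd_add, zpow_add₀ xx_ne_zero, zpow_add₀ yy_ne_zero]
  ring

lemma zmon_one_zero : zmon (1, 0) = xx := by simp [zmon]

lemma zmon_zero_one : zmon (0, 1) = yy := by simp [zmon]

lemma pairing_add_right (μ γ γ' : ℤ × ℤ) :
    pairing μ (γ + γ') = pairing μ γ + pairing μ γ' := by
  simp only [pairing, Prod.fst_add, Prod.snd_add]
  ring

lemma pairing_anticomm (μ γ : ℤ × ℤ) : pairing γ μ = -pairing μ γ := by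
  simp only [pairing]
  ring

lemma pairing_self (μ : ℤ × ℤ) : pairing μ μ = 0 := by
  simp only [pairing]
  ring

lemma algHom_ext_of_xx_yy {A : Type*} [CommRing A] [Algebra ℂ A] {f g : K →ₐ[ℂ] A}
    (hx : f xx = g xx) (hy : f yy = g yy) : f = g := by
  have hpoly : f.comp (IsScalarTower.toAlgHom ℂ (MvPolynomial (Fin 2) ℂ) K)
      = g.comp (IsScalarTower.toAlgHom ℂ (MvPolynomial (Fin 2) ℂ) K) :=
    MvPolynomial.algHom_ext fun i => by fin_cases i; exacts [hx, hy]
  exact AlgHom.coe_ringHom_injective <|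
    IsLocalization.ringHom_ext (nonZeroDivisors _) (RingHom.ext fun p => AlgHom.congr_fun hpoly p)

namespace IsWallCrossing

variable {d : ℤ} {γ : ℤ × ℤ} {Φ : K ≃ₐ[ℂ] K}

lemma map_one_add_zmon (hΦ : IsWallCrossing d γ Φ) (ν : ℤ × ℤ) :
    Φ (1 + zmon ν) = 1 + zmon ν * (1 + zmon γ) ^ (d * pairing ν γ) := by
  rw [map_add, map_one, hΦ ν]

/-- The existence of `𝒦_{γ,d}` already forces `1 + z^γ ≠ 0`: otherwise it would send the
nonzero monomial `z^μ` to `0`. -/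
lemma one_add_zmon_ne_zero (hΦ : IsWallCrossing d γ Φ) {μ : ℤ × ℤ}
    (hμ : d * pairing μ γ ≠ 0) : 1 + zmon γ ≠ 0 := by
  intro h0
  have := hΦ μ
  rw [h0, zero_zpow _ hμ, mul_zero, map_eq_zero_iff _ Φ.injective] at this
  exact zmon_ne_zero μ this

end IsWallCrossing

section Pentagon

variable {γ γ' : ℤ × ℤ} {Kγ Kγ' Kγγ' : K ≃ₐ[ℂ] K}

theorem pentagon_zmon (h : pairing γ' γ = 1) (hγ : IsWallCrossing 1 γ Kγ)
    (hγ' : IsWallCrossing 1 γ' Kγ') (hγγ' : IsWallCrossing 1 (γ + γ') Kγγ') (μ : ℤ × ℤ) :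
    Kγ (Kγ' (zmon μ)) = Kγ' (Kγγ' (Kγ (zmon μ))) := by
  have h₁ : pairing γ γ' = -1 := by rw [pairing_anticomm, h]
  have h₂ : pairing γ (γ + γ') = -1 := by rw [pairing_add_right, pairing_self, h₁, zero_add]
  have h₃ : pairing (γ + γ') γ' = -1 := by
    rw [pairing_anticomm, pairing_add_right, pairing_self, h, add_zero]
  have hB : 1 + zmon γ' ≠ 0 := hγ'.one_add_zmon_ne_zero (μ := γ) (by rw [h₁]; norm_num)
  have hC : 1 + zmon (γ + γ') ≠ 0 := hγγ'.one_add_zmon_ne_zero (μ := γ) (by rw [h₂]; norm_num)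
  have hKγB : Kγ (1 + zmon γ') = 1 + zmon γ' * (1 + zmon γ) := by
    rw [hγ.map_one_add_zmon, h, one_mul, zpow_one]
  have hD : 1 + zmon γ' * (1 + zmon γ) ≠ 0 :=
    hKγB ▸ (map_ne_zero_iff _ Kγ.injective).mpr hB
  have hKγγ'A : Kγγ' (1 + zmon γ) = 1 + zmon γ / (1 + zmon (γ + γ')) := by
    rw [hγγ'.map_one_add_zmon, h₂, one_mul, zpow_neg_one, div_eq_mul_inv]
  have hKγ'C : Kγ' (1 + zmon (γ + γ')) = (1 + zmon γ' * (1 + zmon γ)) / (1 + zmon γ') := by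
    rw [hγ'.map_one_add_zmon, h₃, one_mul, zpow_neg_one, zmon_add]
    field_simp
    ring
  have hKγ'Kγγ'A : Kγ' (Kγγ' (1 + zmon γ))
      = (1 + zmon γ) * (1 + zmon γ') / (1 + zmon γ' * (1 + zmon γ)) := by
    rw [hKγγ'A, map_add, map_one, map_div₀, hKγ'C, hγ' γ, h₁, one_mul, zpow_neg_one]
    field_simp
    ring
  set A := 1 + zmon γ
  set B := 1 + zmon γ'
  set D := 1 + zmon γ' * A
  set m := pairing μ γ
  set n := pairing μ γ'
  calc Kγ (Kγ' (zmon μ)) = zmon μ * A ^ m * D ^ n := by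
        rw [hγ' μ, map_mul, map_zpow₀, hKγB, hγ μ, one_mul, one_mul]
    _ = zmon μ * B ^ n * (D / B) ^ (m + n) * (A * B / D) ^ m := by
        rw [div_zpow, div_zpow, mul_zpow, zpow_add₀ hB, zpow_add₀ hD]
        field_simp
    _ = Kγ' (Kγγ' (Kγ (zmon μ))) := by
        rw [hγ μ, map_mul, map_zpow₀, hγγ' μ, map_mul, map_mul, map_zpow₀, map_zpow₀,
          hKγ'C, hKγ'Kγγ'A, hγ' μ, pairing_add_right, one_mul, one_mul, one_mul]

end Pentagon

/-- Pentagon identity for elementary wall-crossing transformations: for all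
`γ, γ' ∈ ℤ²` with `⟨γ',γ⟩ = 1`, one has `𝒦_γ ∘ 𝒦_{γ'} = 𝒦_{γ'} ∘ 𝒦_{γ+γ'} ∘ 𝒦_γ`
as automorphisms of `K = ℂ(x,y)` (compositions applied right to left). -/
theorem pentagon_identity (γ γ' : ℤ × ℤ) (h : pairing γ' γ = 1)
    (Kγ Kγ' Kγγ' : K ≃ₐ[ℂ] K)
    (hγ : IsWallCrossing 1 γ Kγ) (hγ' : IsWallCrossing 1 γ' Kγ')
    (hγγ' : IsWallCrossing 1 (γ + γ') Kγγ') :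
    ∀ f : K, Kγ (Kγ' f) = Kγ' (Kγγ' (Kγ f)) := by
  have hext : Kγ.toAlgHom.comp Kγ'.toAlgHom
      = Kγ'.toAlgHom.comp (Kγγ'.toAlgHom.comp Kγ.toAlgHom) := by
    refine algHom_ext_of_xx_yy ?_ ?_
    · simpa [zmon_one_zero] using pentagon_zmon h hγ hγ' hγγ' (1, 0)
    · simpa [zmon_zero_one] using pentagon_zmon h hγ hγ' hγγ' (0, 1)
  exact fun f => AlgHom.congr_fun hext f

end
end

section
/- A₂ cancellation lemma (Lemma 5.9 of the paper): let γ₁ = (−1,0), γ₂ = (0,1), γ₃ = (1,1), γ₄ = (1,0), γ₅ = (0,−1). Then the composite 𝒦_{γ₅} ∘ 𝒦_{γ₄} ∘ 𝒦_{γ₃} ∘ 𝒦_{γ₂} ∘ 𝒦_{γ₁} of the five wall-crossing automorphisms of K = ℂ(x,y) sends x ↦ xy and y ↦ x^{−1}; equivalently it sends z^μ ↦ z^{M^{−1}μ} for every μ ∈ ℤ², where M : ℤ² → ℤ² is the linear map with M(1,0) = (0,−1) and M(0,1) = (1,1). That is, the composition of the five wall-crossing transformations cancels the monodromy M of the type II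 singular fibre. -/
/-!
Each 𝒦 is a field automorphism, so the composite is determined by the images of `x` and `y`.
Applying 𝒦_{γ₁}, …, 𝒦_{γ₅} in turn, the pair `(x, y)` becomes
`(x, y(1+x)/x)`, `(x(1+y), y(1+x+xy)/(x(1+y)))`, `(x(1+y+xy), y(1+x)/(x(1+y+xy)))`,
`(x(1+y), y/(x(1+y)))` and finally `(xy, x⁻¹)`. The binomial factors cancel because
𝒦_{(1,1)} sends `1+y ↦ (1+y+xy)/(1+xy)` and `1+x+xy ↦ (1+x)(1+xy)`, while 𝒦_{(1,0)} sends
`1+y+xy ↦ 1+y`.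
-/

open MvPolynomial

noncomputable section

lemma one_add_algebraMap_ne_zero {p : MvPolynomial (Fin 2) ℂ} (hp : constantCoeff p = 0) :
    1 + algebraMap _ K p ≠ 0 := by
  rw [← map_one (algebraMap (MvPolynomial (Fin 2) ℂ) K), ← map_add, Ne,
    IsFractionRing.to_map_eq_zero_iff]
  exact ne_zero_of_map (f := constantCoeff) (by simp [hp])

lemma one_add_xx_ne_zero : 1 + xx ≠ 0 := one_add_algebraMap_ne_zero (constantCoeff_X ℂ 0)

lemma one_add_yy_ne_zero : 1 + yy ≠ 0 := one_add_algebraMap_ne_zero (constantCoeff_X ℂ 1)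

lemma one_add_xx_mul_yy_ne_zero : 1 + xx * yy ≠ 0 := by
  rw [xx, yy, ← map_mul]
  exact one_add_algebraMap_ne_zero (by simp)

namespace IsWallCrossing

variable {d : ℤ} {γ : ℤ × ℤ} {Φ : K ≃ₐ[ℂ] K}

lemma map_xx (h : IsWallCrossing d γ Φ) : Φ xx = xx * (1 + zmon γ) ^ (d * γ.2) := by
  simpa [zmon, pairing] using h (1, 0)

lemma map_yy (h : IsWallCrossing d γ Φ) : Φ yy = yy * (1 + zmon γ) ^ (-(d * γ.1)) := by
  simpa [zmon, pairing] using h (0, 1)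

end IsWallCrossing

section A2

variable {Φ : K ≃ₐ[ℂ] K}

lemma A2_step₁ (h : IsWallCrossing 1 (-1, 0) Φ) :
    Φ xx = xx ∧ Φ yy = yy * (1 + xx) / xx := by
  obtain ⟨hx, hy⟩ : Φ xx = xx ∧ Φ yy = yy * (1 + xx⁻¹) := by
    simpa [zmon] using And.intro h.map_xx h.map_yy
  refine ⟨hx, ?_⟩
  have := xx_ne_zero
  rw [hy]
  field_simp
  ring

lemma A2_step₂ (h : IsWallCrossing 1 (0, 1) Φ) :
    Φ xx = xx * (1 + yy) ∧
      Φ (yy * (1 + xx) / xx) = yy * (1 + xx + xx * yy) / (xx * (1 + yy)) := by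
  obtain ⟨hx, hy⟩ : Φ xx = xx * (1 + yy) ∧ Φ yy = yy := by
    simpa [zmon] using And.intro h.map_xx h.map_yy
  refine ⟨hx, ?_⟩
  simp only [map_div₀, map_mul, map_add, map_one, hx, hy]
  ring

lemma A2_step₃ (h : IsWallCrossing 1 (1, 1) Φ) :
    Φ (xx * (1 + yy)) = xx * (1 + yy + xx * yy) ∧
      Φ (yy * (1 + xx + xx * yy) / (xx * (1 + yy))) =
        yy * (1 + xx) / (xx * (1 + yy + xx * yy)) := by
  obtain ⟨hx, hy⟩ : Φ xx = xx * (1 + xx * yy) ∧ Φ yy = yy * (1 + xx * yy)⁻¹ := by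
    simpa [zmon] using And.intro h.map_xx h.map_yy
  have := one_add_xx_mul_yy_ne_zero
  -- `field_simp` may reorder the product to `y * x`
  have : 1 + yy * xx ≠ 0 := mul_comm xx yy ▸ one_add_xx_mul_yy_ne_zero
  have h_one_add_yy : Φ (1 + yy) = (1 + yy + xx * yy) / (1 + xx * yy) := by
    simp only [map_add, map_one, hy]
    field_simp
    ring
  have h_one_add_xx_add : Φ (1 + xx + xx * yy) = (1 + xx) * (1 + xx * yy) := by
    simp only [map_add, map_one, map_mul, hx, hy]
    field_simp
    ring
  constructor
  · rw [map_mul, hx, h_one_add_yy]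
    field_simp
  · rw [map_div₀, map_mul, map_mul, hx, hy, h_one_add_yy, h_one_add_xx_add]
    field_simp

lemma A2_step₄ (h : IsWallCrossing 1 (1, 0) Φ) :
    Φ (xx * (1 + yy + xx * yy)) = xx * (1 + yy) ∧
      Φ (yy * (1 + xx) / (xx * (1 + yy + xx * yy))) = yy / (xx * (1 + yy)) := by
  obtain ⟨hx, hy⟩ : Φ xx = xx ∧ Φ yy = yy * (1 + xx)⁻¹ := by
    simpa [zmon] using And.intro h.map_xx h.map_yy
  have := one_add_xx_ne_zero
  have h_one_add_add : Φ (1 + yy + xx * yy) = 1 + yy := by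
    simp only [map_add, map_one, map_mul, hx, hy]
    field_simp
    ring
  constructor
  · rw [map_mul, hx, h_one_add_add]
  · rw [map_div₀, map_mul, map_mul, map_add, map_one, hx, hy, h_one_add_add]
    field_simp

lemma A2_step₅ (h : IsWallCrossing 1 (0, -1) Φ) :
    Φ (xx * (1 + yy)) = xx * yy ∧ Φ (yy / (xx * (1 + yy))) = xx⁻¹ := by
  obtain ⟨hx, hy⟩ : Φ xx = xx * (1 + yy⁻¹)⁻¹ ∧ Φ yy = yy := by
    simpa [zmon] using And.intro h.map_xx h.map_yy
  have := yy_ne_zero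
  have := one_add_yy_ne_zero
  -- `field_simp` rewrites `1 + y⁻¹` as `(y + 1) / y`
  have : yy + 1 ≠ 0 := add_comm 1 yy ▸ one_add_yy_ne_zero
  constructor
  · simp only [map_mul, map_add, map_one, hx, hy]
    field_simp
    ring
  · simp only [map_div₀, map_mul, map_add, map_one, hx, hy]
    field_simp
    ring

end A2

/-- A₂ cancellation lemma: with `γ₁ = (−1,0)`, `γ₂ = (0,1)`, `γ₃ = (1,1)`, `γ₄ = (1,0)`,
`γ₅ = (0,−1)`, the composite `𝒦_{γ₅} ∘ 𝒦_{γ₄} ∘ 𝒦_{γ₃} ∘ 𝒦_{γ₂} ∘ 𝒦_{γ₁}` sends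
`z^μ ↦ z^{M⁻¹μ}` for every `μ ∈ ℤ²`, where `M(1,0) = (0,−1)`, `M(0,1) = (1,1)`,
so `M⁻¹(m,n) = (m−n, m)`; in particular `x ↦ xy` and `y ↦ x⁻¹`. -/
theorem A2_cancellation
    (K1 K2 K3 K4 K5 : K ≃ₐ[ℂ] K)
    (h1 : IsWallCrossing 1 (-1, 0) K1) (h2 : IsWallCrossing 1 (0, 1) K2)
    (h3 : IsWallCrossing 1 (1, 1) K3) (h4 : IsWallCrossing 1 (1, 0) K4)
    (h5 : IsWallCrossing 1 (0, -1) K5) :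
    ∀ μ : ℤ × ℤ, K5 (K4 (K3 (K2 (K1 (zmon μ))))) = zmon (μ.1 - μ.2, μ.1) := by
  obtain ⟨hx₁, hy₁⟩ := A2_step₁ h1
  obtain ⟨hx₂, hy₂⟩ := A2_step₂ h2
  obtain ⟨hx₃, hy₃⟩ := A2_step₃ h3
  obtain ⟨hx₄, hy₄⟩ := A2_step₄ h4
  obtain ⟨hx₅, hy₅⟩ := A2_step₅ h5
  have hx : K5 (K4 (K3 (K2 (K1 xx)))) = xx * yy := by rw [hx₁, hx₂, hx₃, hx₄, hx₅]
  have hy : K5 (K4 (K3 (K2 (K1 yy)))) = xx⁻¹ := by rw [hy₁, hy₂, hy₃, hy₄, hy₅]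
  intro μ
  simp only [zmon, map_mul, map_zpow₀, hx, hy]
  rw [mul_zpow, inv_zpow', zpow_sub₀ xx_ne_zero, zpow_neg]
  ring

end
end

section
/- Consistency of the G₂ (canonical) scattering diagram used for the del Pezzo surface of degree 4: as automorphisms of K = ℂ(x,y), 𝒦_{(0,1),3} ∘ 𝒦_{(1,0),1} = 𝒦_{(1,0),1} ∘ 𝒦_{(1,1),3} ∘ 𝒦_{(2,3),1} ∘ 𝒦_{(1,2),3} ∘ 𝒦_{(1,3),1} ∘ 𝒦_{(0,1),3}. -/
set_option synthInstance.maxHeartbeats 1000000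
set_option maxHeartbeats 2000000

open MvPolynomial

noncomputable section

/-! ### Auxiliary lemmas -/

/-- Two `ℂ`-algebra automorphisms of `K` that agree on `x` and `y` agree everywhere. -/
lemma ext_lemma (Φ Ψ : K ≃ₐ[ℂ] K) (hx : Φ xx = Ψ xx) (hy : Φ yy = Ψ yy) (f : K) :
    Φ f = Ψ f := by
  have h : (Φ.toAlgHom.comp (IsScalarTower.toAlgHom ℂ (MvPolynomial (Fin 2) ℂ) K))
      = (Ψ.toAlgHom.comp (IsScalarTower.toAlgHom ℂ (MvPolynomial (Fin 2) ℂ) K)) := by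
    apply MvPolynomial.algHom_ext
    intro i
    fin_cases i
    · simpa [xx] using hx
    · simpa [yy] using hy
  have h2 : (Φ : K →+* K) = (Ψ : K →+* K) := by
    apply IsLocalization.ringHom_ext (nonZeroDivisors (MvPolynomial (Fin 2) ℂ))
    refine RingHom.ext fun p => ?_
    simpa using AlgHom.congr_fun h p
  exact congrArg (fun g => g f) h2

/-- A polynomial with nonzero value at the origin is nonzero in `K`. -/
lemma ne_zero_of_eval (p : MvPolynomial (Fin 2) ℂ) (h : eval (fun _ => (0:ℂ)) p ≠ 0) :
    algebraMap (MvPolynomial (Fin 2) ℂ) K p ≠ 0 := by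
  intro hp
  apply h
  have : p = 0 := IsFractionRing.injective (MvPolynomial (Fin 2) ℂ) K
    (by rw [map_zero]; exact hp)
  simp [this]

lemma zpow2 (a : K) : a ^ (2:ℤ) = a ^ 2 := by
  rw [show (2:ℤ) = ((2:ℕ):ℤ) by norm_num, zpow_natCast]
lemma zpow3 (a : K) : a ^ (3:ℤ) = a ^ 3 := by
  rw [show (3:ℤ) = ((3:ℕ):ℤ) by norm_num, zpow_natCast]
lemma zpow6 (a : K) : a ^ (6:ℤ) = a ^ 6 := by
  rw [show (6:ℤ) = ((6:ℕ):ℤ) by norm_num, zpow_natCast]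

/-! ### Abstract field identities -/

section AbstractField
variable {F : Type} [Field F] (x y : F)

lemma L1 (h : (1:F) + x * y ^ 3 ≠ 0) :
    x * (1 + x * y ^ 3) ^ 3 * (1 + y * (1 + x * y ^ 3)⁻¹) ^ 3
      = x * (1 + y + x * y ^ 3) ^ 3 := by
  field_simp; ring

lemma L2 (h : (1:F) + x * y ^ 2 ≠ 0) :
    x * (1 + x * y ^ 2) ^ 6 *
      (1 + y * ((1 + x * y ^ 2) ^ 3)⁻¹
        + x * (1 + x * y ^ 2) ^ 6 * (y * ((1 + x * y ^ 2) ^ 3)⁻¹) ^ 3) ^ 3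
      = x * ((1 + x * y ^ 2) ^ 2 + y) ^ 3 := by
  field_simp; ring

lemma L3 (h : (1:F) + x ^ 2 * y ^ 3 ≠ 0) :
    x * (1 + x ^ 2 * y ^ 3) ^ 3 *
      ((1 + x * (1 + x ^ 2 * y ^ 3) ^ 3 * (y * ((1 + x ^ 2 * y ^ 3) ^ 2)⁻¹) ^ 2) ^ 2
        + y * ((1 + x ^ 2 * y ^ 3) ^ 2)⁻¹) ^ 3
      = x * (1 + y + 2 * (x * y ^ 2) + x ^ 2 * y ^ 3) ^ 3 := by
  field_simp; ring

lemma L4 (h : (1:F) + x * y ≠ 0) :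
    x * (1 + x * y) ^ 3 *
      (1 + y * ((1 + x * y) ^ 3)⁻¹
        + 2 * (x * (1 + x * y) ^ 3 * (y * ((1 + x * y) ^ 3)⁻¹) ^ 2)
        + (x * (1 + x * y) ^ 3) ^ 2 * (y * ((1 + x * y) ^ 3)⁻¹) ^ 3) ^ 3
      = x * (1 + y + x * y) ^ 3 := by
  field_simp; ring

lemma L5 (h : (1:F) + x ≠ 0) :
    x * (1 + y * (1 + x)⁻¹ + x * (y * (1 + x)⁻¹)) ^ 3 = x * (1 + y) ^ 3 := by
  field_simp; ring

lemma L6 (h : (1:F) + x * y ^ 2 ≠ 0) :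
    1 + x * (1 + x * y ^ 2) ^ 6 * (y * ((1 + x * y ^ 2) ^ 3)⁻¹) ^ 3
      = ((1 + x * y ^ 2) ^ 3 + x * y ^ 3) * ((1 + x * y ^ 2) ^ 3)⁻¹ := by
  field_simp

lemma L7 (h : (1:F) + x ^ 2 * y ^ 3 ≠ 0) :
    (1 + x * (1 + x ^ 2 * y ^ 3) ^ 3 * (y * ((1 + x ^ 2 * y ^ 3) ^ 2)⁻¹) ^ 2) ^ 3
        + x * (1 + x ^ 2 * y ^ 3) ^ 3 * (y * ((1 + x ^ 2 * y ^ 3) ^ 2)⁻¹) ^ 3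
      = (1 + 3 * (x * y ^ 2) + x * y ^ 3 + 2 * (x ^ 2 * y ^ 3) + 3 * (x ^ 2 * y ^ 4)
          + 3 * (x ^ 3 * y ^ 5) + x ^ 4 * y ^ 6) * ((1 + x ^ 2 * y ^ 3) ^ 2)⁻¹ := by
  field_simp; ring

lemma L8 (h : (1:F) + x * y ≠ 0) :
    1 + 3 * (x * (1 + x * y) ^ 3 * (y * ((1 + x * y) ^ 3)⁻¹) ^ 2)
        + x * (1 + x * y) ^ 3 * (y * ((1 + x * y) ^ 3)⁻¹) ^ 3
        + 2 * ((x * (1 + x * y) ^ 3) ^ 2 * (y * ((1 + x * y) ^ 3)⁻¹) ^ 3)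
        + 3 * ((x * (1 + x * y) ^ 3) ^ 2 * (y * ((1 + x * y) ^ 3)⁻¹) ^ 4)
        + 3 * ((x * (1 + x * y) ^ 3) ^ 3 * (y * ((1 + x * y) ^ 3)⁻¹) ^ 5)
        + (x * (1 + x * y) ^ 3) ^ 4 * (y * ((1 + x * y) ^ 3)⁻¹) ^ 6
      = ((1 + x * y) ^ 3 + 3 * (x * y ^ 2) + 2 * (x ^ 2 * y ^ 3) + x * y ^ 3)
          * ((1 + x * y) ^ 3)⁻¹ := by
  have hi : ((1:F) + x * y) ^ 3 * (((1:F) + x * y) ^ 3)⁻¹ = 1 :=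
    mul_inv_cancel₀ (pow_ne_zero 3 h)
  set I8 := (((1:F) + x * y) ^ 3)⁻¹ with hI8
  linear_combination ((-1) + 3 * x * y ^ 2 * I8 + x * y ^ 3 * I8 + x * y ^ 3 * I8 ^ 2 + 2 * x ^ 2 * y ^ 3 * I8 + 2 * x ^ 2 * y ^ 3 * I8 ^ 2 + 3 * x ^ 2 * y ^ 4 * I8 ^ 2 + 3 * x ^ 2 * y ^ 4 * I8 ^ 3 + 6 * x ^ 3 * y ^ 4 * I8 ^ 2 + 3 * x ^ 3 * y ^ 5 * I8 ^ 2 + 12 * x ^ 3 * y ^ 5 * I8 ^ 3 + 3 * x ^ 3 * y ^ 5 * I8 ^ 4 + 6 * x ^ 4 * y ^ 5 * I8 ^ 2 + x ^ 4 * y ^ 6 * I8 ^ 2 + 19 * x ^ 4 * y ^ 6 * I8 ^ 3 + 19 * x ^ 4 * y ^ 6 * I8 ^ 4 + x ^ 4 * y ^ 6 * I8 ^ 5 + 2 * x ^ 5 * y ^ 6 * I8 ^ 2 + 15 * x ^ 5 * y ^ 7 * I8 ^ 3 + 51 * x ^ 5 * y ^ 7 * I8 ^ 4 + 9 * x ^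 5 * y ^ 7 * I8 ^ 5 + 6 * x ^ 6 * y ^ 8 * I8 ^ 3 + 75 * x ^ 6 * y ^ 8 * I8 ^ 4 + 36 * x ^ 6 * y ^ 8 * I8 ^ 5 + x ^ 7 * y ^ 9 * I8 ^ 3 + 65 * x ^ 7 * y ^ 9 * I8 ^ 4 + 84 * x ^ 7 * y ^ 9 * I8 ^ 5 + 33 * x ^ 8 * y ^ 10 * I8 ^ 4 + 126 * x ^ 8 * y ^ 10 * I8 ^ 5 + 9 * x ^ 9 * y ^ 11 * I8 ^ 4 + 126 * x ^ 9 * y ^ 11 * I8 ^ 5 + x ^ 10 * y ^ 12 * I8 ^ 4 + 84 * x ^ 10 * y ^ 12 * I8 ^ 5 + 36 * x ^ 11 * y ^ 13 * I8 ^ 5 + 9 * x ^ 12 * y ^ 14 * I8 ^ 5 + x ^ 13 * y ^ 15 * I8 ^ 5) * hi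

lemma L9 (h : (1:F) + x ≠ 0) :
    (1 + x * (y * (1 + x)⁻¹)) ^ 3 + 3 * (x * (y * (1 + x)⁻¹) ^ 2)
        + 2 * (x ^ 2 * (y * (1 + x)⁻¹) ^ 3) + x * (y * (1 + x)⁻¹) ^ 3
      = (1 + x * (1 + y) ^ 3) * (1 + x)⁻¹ := by
  have hj : ((1:F) + x) * ((1:F) + x)⁻¹ = 1 := mul_inv_cancel₀ h
  set I9 := ((1:F) + x)⁻¹ with hI9
  linear_combination ((-1) + 3 * x * y ^ 2 * I9 + x * y ^ 3 * I9 + x * y ^ 3 * I9 ^ 2 + x ^ 2 * y ^ 3 * I9 ^ 2) * hj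

lemma Lcomb (u D w : F) (hu : u ≠ 0) (hD : D ≠ 0) :
    w * u⁻¹ * (D * u⁻¹)⁻¹ = w * D⁻¹ := by
  field_simp

end AbstractField

/-! ### Main theorem -/

/-- Consistency of the G₂ canonical scattering diagram: as automorphisms of `K = ℂ(x,y)`,
`𝒦_{(0,1),3} ∘ 𝒦_{(1,0),1} =
 𝒦_{(1,0),1} ∘ 𝒦_{(1,1),3} ∘ 𝒦_{(2,3),1} ∘ 𝒦_{(1,2),3} ∘ 𝒦_{(1,3),1} ∘ 𝒦_{(0,1),3}`. -/
theorem G2_consistency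
    (K10 K01 K13 K12 K23 K11 : K ≃ₐ[ℂ] K)
    (h10 : IsWallCrossing 1 (1, 0) K10) (h01 : IsWallCrossing 3 (0, 1) K01)
    (h13 : IsWallCrossing 1 (1, 3) K13) (h12 : IsWallCrossing 3 (1, 2) K12)
    (h23 : IsWallCrossing 1 (2, 3) K23) (h11 : IsWallCrossing 3 (1, 1) K11) :
    ∀ f : K, K01 (K10 f) = K10 (K11 (K23 (K12 (K13 (K01 f))))) := by
  -- wall values on the generators
  have h01x : K01 xx = xx * (1 + yy) ^ 3 := by
    have := h01 (1,0); simp [zmon, pairing] at this; exact this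
  have h01y : K01 yy = yy := by
    have := h01 (0,1); simpa [zmon, pairing] using this
  have h10x : K10 xx = xx := by
    have := h10 (1,0); simpa [zmon, pairing] using this
  have h10y : K10 yy = yy * (1 + xx)⁻¹ := by
    have := h10 (0,1); simp [zmon, pairing, zpow_neg] at this; exact this
  have h13x : K13 xx = xx * (1 + xx * yy ^ 3) ^ 3 := by
    have := h13 (1,0); simp [zmon, pairing] at this; exact this
  have h13y : K13 yy = yy * (1 + xx * yy ^ 3)⁻¹ := by
    have := h13 (0,1); simp [zmon, pairing, zpow_neg] at this
    exact this
  have h12x : K12 xx = xx * (1 + xx * yy ^ 2) ^ 6 := by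
    have := h12 (1,0); simp [zmon, pairing] at this
    exact this
  have h12y : K12 yy = yy * ((1 + xx * yy ^ 2) ^ 3)⁻¹ := by
    have := h12 (0,1); simp [zmon, pairing, zpow_neg] at this
    exact this
  have h23x : K23 xx = xx * (1 + xx ^ 2 * yy ^ 3) ^ 3 := by
    have := h23 (1,0); simp [zmon, pairing] at this
    exact this
  have h23y : K23 yy = yy * ((1 + xx ^ 2 * yy ^ 3) ^ 2)⁻¹ := by
    have := h23 (0,1); simp [zmon, pairing, zpow_neg] at this
    exact this
  have h11x : K11 xx = xx * (1 + xx * yy) ^ 3 := by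
    have := h11 (1,0); simp [zmon, pairing] at this; exact this
  have h11y : K11 yy = yy * ((1 + xx * yy) ^ 3)⁻¹ := by
    have := h11 (0,1); simp [zmon, pairing, zpow_neg] at this
    exact this
  -- nonvanishing facts
  have nD2 : (1:K) + xx * yy ^ 3 ≠ 0 := by
    rw [show (1:K) + xx * yy ^ 3
        = algebraMap (MvPolynomial (Fin 2) ℂ) K (1 + X 0 * X 1 ^ 3) by
      simp only [map_add, map_one, map_mul, map_pow, xx, yy]]
    exact ne_zero_of_eval _ (by simp)
  have nu : (1:K) + xx * yy ^ 2 ≠ 0 := by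
    rw [show (1:K) + xx * yy ^ 2
        = algebraMap (MvPolynomial (Fin 2) ℂ) K (1 + X 0 * X 1 ^ 2) by
      simp only [map_add, map_one, map_mul, map_pow, xx, yy]]
    exact ne_zero_of_eval _ (by simp)
  have nD3 : ((1:K) + xx * yy ^ 2) ^ 3 + xx * yy ^ 3 ≠ 0 := by
    rw [show ((1:K) + xx * yy ^ 2) ^ 3 + xx * yy ^ 3
        = algebraMap (MvPolynomial (Fin 2) ℂ) K ((1 + X 0 * X 1 ^ 2) ^ 3 + X 0 * X 1 ^ 3) by
      simp only [map_add, map_one, map_mul, map_pow, xx, yy]]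
    exact ne_zero_of_eval _ (by simp)
  have nv : (1:K) + xx ^ 2 * yy ^ 3 ≠ 0 := by
    rw [show (1:K) + xx ^ 2 * yy ^ 3
        = algebraMap (MvPolynomial (Fin 2) ℂ) K (1 + X 0 ^ 2 * X 1 ^ 3) by
      simp only [map_add, map_one, map_mul, map_pow, xx, yy]]
    exact ne_zero_of_eval _ (by simp)
  have nD4 : (1:K) + 3 * (xx * yy ^ 2) + xx * yy ^ 3 + 2 * (xx ^ 2 * yy ^ 3)
      + 3 * (xx ^ 2 * yy ^ 4) + 3 * (xx ^ 3 * yy ^ 5) + xx ^ 4 * yy ^ 6 ≠ 0 := by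
    rw [show (1:K) + 3 * (xx * yy ^ 2) + xx * yy ^ 3 + 2 * (xx ^ 2 * yy ^ 3)
        + 3 * (xx ^ 2 * yy ^ 4) + 3 * (xx ^ 3 * yy ^ 5) + xx ^ 4 * yy ^ 6
        = algebraMap (MvPolynomial (Fin 2) ℂ) K
          (1 + 3 * (X 0 * X 1 ^ 2) + X 0 * X 1 ^ 3 + 2 * (X 0 ^ 2 * X 1 ^ 3)
            + 3 * (X 0 ^ 2 * X 1 ^ 4) + 3 * (X 0 ^ 3 * X 1 ^ 5) + X 0 ^ 4 * X 1 ^ 6) by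
      simp only [map_add, map_one, map_mul, map_pow, map_ofNat, xx, yy]]
    exact ne_zero_of_eval _ (by simp)
  have np : (1:K) + xx * yy ≠ 0 := by
    rw [show (1:K) + xx * yy
        = algebraMap (MvPolynomial (Fin 2) ℂ) K (1 + X 0 * X 1) by
      simp only [map_add, map_one, map_mul, xx, yy]]
    exact ne_zero_of_eval _ (by simp)
  have nD5 : ((1:K) + xx * yy) ^ 3 + 3 * (xx * yy ^ 2) + 2 * (xx ^ 2 * yy ^ 3)
      + xx * yy ^ 3 ≠ 0 := by
    rw [show ((1:K) + xx * yy) ^ 3 + 3 * (xx * yy ^ 2) + 2 * (xx ^ 2 * yy ^ 3) + xx * yy ^ 3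
        = algebraMap (MvPolynomial (Fin 2) ℂ) K
          ((1 + X 0 * X 1) ^ 3 + 3 * (X 0 * X 1 ^ 2) + 2 * (X 0 ^ 2 * X 1 ^ 3)
            + X 0 * X 1 ^ 3) by
      simp only [map_add, map_one, map_mul, map_pow, map_ofNat, xx, yy]]
    exact ne_zero_of_eval _ (by simp)
  have ne1 : (1:K) + xx ≠ 0 := by
    rw [show (1:K) + xx = algebraMap (MvPolynomial (Fin 2) ℂ) K (1 + X 0) by
      simp only [map_add, map_one, xx]]
    exact ne_zero_of_eval _ (by simp)
  have nD6 : (1:K) + xx * (1 + yy) ^ 3 ≠ 0 := by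
    rw [show (1:K) + xx * (1 + yy) ^ 3
        = algebraMap (MvPolynomial (Fin 2) ℂ) K (1 + X 0 * (1 + X 1) ^ 3) by
      simp only [map_add, map_one, map_mul, map_pow, xx, yy]]
    exact ne_zero_of_eval _ (by simp)
  -- the x-chain
  have c2x : K13 (K01 xx) = xx * (1 + yy + xx * yy ^ 3) ^ 3 := by
    rw [h01x]
    simp only [map_mul, map_add, map_pow, map_one, h13x, h13y]
    exact L1 xx yy nD2
  have c3x : K12 (K13 (K01 xx)) = xx * ((1 + xx * yy ^ 2) ^ 2 + yy) ^ 3 := by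
    rw [c2x]
    simp only [map_mul, map_add, map_pow, map_one, h12x, h12y]
    exact L2 xx yy nu
  have c4x : K23 (K12 (K13 (K01 xx)))
      = xx * (1 + yy + 2 * (xx * yy ^ 2) + xx ^ 2 * yy ^ 3) ^ 3 := by
    rw [c3x]
    simp only [map_mul, map_add, map_pow, map_one, h23x, h23y]
    exact L3 xx yy nv
  have c5x : K11 (K23 (K12 (K13 (K01 xx)))) = xx * (1 + yy + xx * yy) ^ 3 := by
    rw [c4x]
    simp only [map_mul, map_add, map_pow, map_one, map_ofNat, h11x, h11y]
    exact L4 xx yy np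
  have c6x : K10 (K11 (K23 (K12 (K13 (K01 xx))))) = xx * (1 + yy) ^ 3 := by
    rw [c5x]
    simp only [map_mul, map_add, map_pow, map_one, h10x, h10y]
    exact L5 xx yy ne1
  -- the y-chain
  have c2y : K13 (K01 yy) = yy * (1 + xx * yy ^ 3)⁻¹ := by rw [h01y, h13y]
  have hD2 : K12 (1 + xx * yy ^ 3)
      = ((1 + xx * yy ^ 2) ^ 3 + xx * yy ^ 3) * ((1 + xx * yy ^ 2) ^ 3)⁻¹ := by
    simp only [map_mul, map_add, map_pow, map_one, h12x, h12y]
    exact L6 xx yy nu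
  have c3y : K12 (K13 (K01 yy)) = yy * ((1 + xx * yy ^ 2) ^ 3 + xx * yy ^ 3)⁻¹ := by
    rw [c2y, map_mul, map_inv₀, h12y, hD2]
    exact Lcomb _ _ _ (pow_ne_zero 3 nu) nD3
  have hD3 : K23 ((1 + xx * yy ^ 2) ^ 3 + xx * yy ^ 3)
      = (1 + 3 * (xx * yy ^ 2) + xx * yy ^ 3 + 2 * (xx ^ 2 * yy ^ 3)
          + 3 * (xx ^ 2 * yy ^ 4) + 3 * (xx ^ 3 * yy ^ 5) + xx ^ 4 * yy ^ 6)
        * ((1 + xx ^ 2 * yy ^ 3) ^ 2)⁻¹ := by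
    simp only [map_mul, map_add, map_pow, map_one, h23x, h23y]
    exact L7 xx yy nv
  have c4y : K23 (K12 (K13 (K01 yy)))
      = yy * (1 + 3 * (xx * yy ^ 2) + xx * yy ^ 3 + 2 * (xx ^ 2 * yy ^ 3)
          + 3 * (xx ^ 2 * yy ^ 4) + 3 * (xx ^ 3 * yy ^ 5) + xx ^ 4 * yy ^ 6)⁻¹ := by
    rw [c3y, map_mul, map_inv₀, h23y, hD3]
    exact Lcomb _ _ _ (pow_ne_zero 2 nv) nD4
  have hD4 : K11 (1 + 3 * (xx * yy ^ 2) + xx * yy ^ 3 + 2 * (xx ^ 2 * yy ^ 3)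
          + 3 * (xx ^ 2 * yy ^ 4) + 3 * (xx ^ 3 * yy ^ 5) + xx ^ 4 * yy ^ 6)
      = ((1 + xx * yy) ^ 3 + 3 * (xx * yy ^ 2) + 2 * (xx ^ 2 * yy ^ 3) + xx * yy ^ 3)
        * ((1 + xx * yy) ^ 3)⁻¹ := by
    simp only [map_mul, map_add, map_pow, map_one, map_ofNat, h11x, h11y]
    exact L8 xx yy np
  have c5y : K11 (K23 (K12 (K13 (K01 yy))))
      = yy * ((1 + xx * yy) ^ 3 + 3 * (xx * yy ^ 2) + 2 * (xx ^ 2 * yy ^ 3)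
          + xx * yy ^ 3)⁻¹ := by
    rw [c4y, map_mul, map_inv₀, h11y, hD4]
    exact Lcomb _ _ _ (pow_ne_zero 3 np) nD5
  have hD5 : K10 ((1 + xx * yy) ^ 3 + 3 * (xx * yy ^ 2) + 2 * (xx ^ 2 * yy ^ 3)
          + xx * yy ^ 3)
      = (1 + xx * (1 + yy) ^ 3) * (1 + xx)⁻¹ := by
    simp only [map_mul, map_add, map_pow, map_one, map_ofNat, h10x, h10y]
    exact L9 xx yy ne1
  have c6y : K10 (K11 (K23 (K12 (K13 (K01 yy))))) = yy * (1 + xx * (1 + yy) ^ 3)⁻¹ := by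
    rw [c5y, map_mul, map_inv₀, h10y, hD5]
    exact Lcomb _ _ _ ne1 nD6
  -- the left-hand side
  have lx : K01 (K10 xx) = xx * (1 + yy) ^ 3 := by rw [h10x, h01x]
  have ly : K01 (K10 yy) = yy * (1 + xx * (1 + yy) ^ 3)⁻¹ := by
    rw [h10y, map_mul, map_inv₀, h01y, map_add, map_one, h01x]
  -- conclude by extensionality
  intro f
  exact ext_lemma (K10.trans K01)
    (K01.trans (K13.trans (K12.trans (K23.trans (K11.trans K10)))))
    (by simpa [AlgEquiv.trans_apply] using lx.trans c6x.symm)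
    (by simpa [AlgEquiv.trans_apply] using ly.trans c6y.symm) f

end
end

section
/- Path-ordered product across the walls l_{γ₂}, l_{γ₃}, l_{γ₄} in the A₂ diagram (explicit computation in the proof of Lemma 5.9): for every (a₁,a₂) ∈ ℤ², (𝒦_{(1,0)} ∘ 𝒦_{(1,1)} ∘ 𝒦_{(0,1)})(x^{a₁} y^{a₂}) = x^{a₁} y^{a₂} · (1 + x + xy)^{−a₂} · (1 + y)^{a₁} in K = ℂ(x,y). -/
open MvPolynomial

noncomputable section

/-- Auxiliary: the image in `K` of a polynomial with nonzero value at `(1,1)` is nonzero. -/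
lemma nzero_aux (p : MvPolynomial (Fin 2) ℂ) (h : eval (fun _ => (1:ℂ)) p ≠ 0) :
    algebraMap (MvPolynomial (Fin 2) ℂ) K p ≠ 0 := by
  intro hp
  apply h
  have h0 : p = 0 := IsFractionRing.injective (MvPolynomial (Fin 2) ℂ) K (by simpa using hp)
  simp [h0]

set_option synthInstance.maxHeartbeats 1000000 in
set_option maxHeartbeats 2000000 in
/-- Path-ordered product across the walls `l_{γ₂}, l_{γ₃}, l_{γ₄}` in the A₂ diagram:
`(𝒦_{(1,0)} ∘ 𝒦_{(1,1)} ∘ 𝒦_{(0,1)})(x^{a₁}y^{a₂}) =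
  x^{a₁} y^{a₂} (1 + x + xy)^{−a₂} (1 + y)^{a₁}`. -/
theorem A2_path_ordered_product
    (K01 K11 K10 : K ≃ₐ[ℂ] K)
    (h01 : IsWallCrossing 1 (0, 1) K01) (h11 : IsWallCrossing 1 (1, 1) K11)
    (h10 : IsWallCrossing 1 (1, 0) K10) :
    ∀ a₁ a₂ : ℤ, K10 (K11 (K01 (xx ^ a₁ * yy ^ a₂))) =
      xx ^ a₁ * yy ^ a₂ * (1 + xx + xx * yy) ^ (-a₂) * (1 + yy) ^ a₁ := by
  intro a₁ a₂
  have hA : (1 + xx : K) ≠ 0 := by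
    have := nzero_aux (1 + X 0) (by simp)
    simp only [map_add, map_one] at this; exact this
  have hD : (1 + xx + xx * yy : K) ≠ 0 := by
    have := nzero_aux (1 + X 0 + X 0 * X 1) (by norm_num)
    simp only [map_add, map_one, map_mul] at this; exact this
  have hB' : (1 + xx * (yy * (1 + xx)⁻¹) : K) ≠ 0 := by
    have h : (1 + xx * (yy * (1 + xx)⁻¹) : K) = (1 + xx + xx * yy) * (1 + xx)⁻¹ := by
      field_simp
    rw [h]
    exact mul_ne_zero hD (inv_ne_zero hA)
  have k01x : K01 xx = xx * (1 + yy) := by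
    have h := h01 (1, 0); simp [zmon, pairing] at h; exact h
  have k01y : K01 yy = yy := by
    have h := h01 (0, 1); simp [zmon, pairing] at h; exact h
  have k11x : K11 xx = xx * (1 + xx * yy) := by
    have h := h11 (1, 0); simp [zmon, pairing] at h; exact h
  have k11y : K11 yy = yy * (1 + xx * yy)⁻¹ := by
    have h := h11 (0, 1); simp [zmon, pairing] at h; exact h
  have k10x : K10 xx = xx := by
    have h := h10 (1, 0); simp [zmon, pairing] at h; exact h
  have k10y : K10 yy = yy * (1 + xx)⁻¹ := by
    have h := h10 (0, 1); simp [zmon, pairing] at h; exact h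
  have b1 : (xx * (1 + xx * (yy * (1 + xx)⁻¹)) *
      (1 + yy * (1 + xx)⁻¹ * (1 + xx * (yy * (1 + xx)⁻¹))⁻¹) : K) = xx * (1 + yy) := by
    field_simp
    ring
  have b2 : (yy * (1 + xx)⁻¹ * (1 + xx * (yy * (1 + xx)⁻¹))⁻¹ : K) =
      yy * (1 + xx + xx * yy)⁻¹ := by
    field_simp
  simp only [map_mul, map_zpow₀, map_add, map_one, map_inv₀, k01x, k01y, k11x, k11y, k10x, k10y]
  rw [b1, b2, mul_zpow, mul_zpow, inv_zpow, zpow_neg]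
  ring

end
end

section
/- Six-periodicity of the B₂ exchange relations (equation (2.2) of the paper with {d₁,d₂} = {1,2}, finite type B₂): let F be a field and (x_n)_{n∈ℤ} a sequence of nonzero elements of F satisfying x_{n−1} · x_{n+1} = (1 + x_n)^{c_n} for every n ∈ ℤ, where c_n = 1 if n is even and c_n = 2 if n is odd. Then x_{n+6} = x_n for every n ∈ ℤ. -/
/-- Six-periodicity of the B₂ exchange relations: if `(x_n)_{n∈ℤ}` is a sequence of
nonzero elements of a field `F` with `x_{n−1} · x_{n+1} = (1 + x_n)^{c_n}` for every `n`,
where `c_n = 1` for `n` even and `c_n = 2` for `n` odd, then `x_{n+6} = x_n` for every `n`. -/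
theorem B2_six_periodicity {F : Type*} [Field F] (x : ℤ → F)
    (hne : ∀ n : ℤ, x n ≠ 0)
    (hrec : ∀ n : ℤ, x (n - 1) * x (n + 1) = (1 + x n) ^ (if Even n then 1 else 2)) :
    ∀ n : ℤ, x (n + 6) = x n := by
  intro n
  have ha := hne n
  have hb := hne (n + 1)
  rcases Int.even_or_odd n with hn | hn
  · -- n even
    have hm : n % 2 = 0 := Int.even_iff.mp hn
    have p1 : ¬ Even (n + 1) := by rw [Int.even_iff]; omega
    have p2 : Even (n + 2) := by rw [Int.even_iff]; omega
    have p3 : ¬ Even (n + 3) := by rw [Int.even_iff]; omega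
    have p4 : Even (n + 4) := by rw [Int.even_iff]; omega
    have p5 : ¬ Even (n + 5) := by rw [Int.even_iff]; omega
    have h1 := hrec (n + 1); rw [if_neg p1] at h1
    simp only [show n + 1 - 1 = n by ring, show n + 1 + 1 = n + 2 by ring] at h1
    have h2 := hrec (n + 2); rw [if_pos p2] at h2
    simp only [show n + 2 - 1 = n + 1 by ring, show n + 2 + 1 = n + 3 by ring, pow_one] at h2
    have h3 := hrec (n + 3); rw [if_neg p3] at h3
    simp only [show n + 3 - 1 = n + 2 by ring, show n + 3 + 1 = n + 4 by ring] at h3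
    have h4 := hrec (n + 4); rw [if_pos p4] at h4
    simp only [show n + 4 - 1 = n + 3 by ring, show n + 4 + 1 = n + 5 by ring, pow_one] at h4
    have h5 := hrec (n + 5); rw [if_neg p5] at h5
    simp only [show n + 5 - 1 = n + 4 by ring, show n + 5 + 1 = n + 6 by ring] at h5
    have E2 : x (n + 2) = (1 + x (n + 1)) ^ 2 / x n := by
      rw [eq_div_iff ha]; linear_combination h1
    have E3 : x (n + 3) = (x n + (1 + x (n + 1)) ^ 2) / (x n * x (n + 1)) := by
      refine mul_left_cancel₀ hb ?_
      rw [h2, E2]; field_simp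
    have E4 : x (n + 4) = (x n + 1 + x (n + 1)) ^ 2 / (x n * x (n + 1) ^ 2) := by
      refine mul_left_cancel₀ (hne (n + 2)) ?_
      rw [h3, E2, E3]; field_simp; ring
    have E5 : x (n + 5) = (1 + x n) / x (n + 1) := by
      refine mul_left_cancel₀ (hne (n + 3)) ?_
      rw [h4, E3, E4]; field_simp; ring
    refine mul_left_cancel₀ (hne (n + 4)) ?_
    rw [h5, E4, E5]; field_simp; ring
  · -- n odd
    have hm : n % 2 = 1 := Int.odd_iff.mp hn
    have p1 : Even (n + 1) := by rw [Int.even_iff]; omega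
    have p2 : ¬ Even (n + 2) := by rw [Int.even_iff]; omega
    have p3 : Even (n + 3) := by rw [Int.even_iff]; omega
    have p4 : ¬ Even (n + 4) := by rw [Int.even_iff]; omega
    have p5 : Even (n + 5) := by rw [Int.even_iff]; omega
    have h1 := hrec (n + 1); rw [if_pos p1] at h1
    simp only [show n + 1 - 1 = n by ring, show n + 1 + 1 = n + 2 by ring, pow_one] at h1
    have h2 := hrec (n + 2); rw [if_neg p2] at h2
    simp only [show n + 2 - 1 = n + 1 by ring, show n + 2 + 1 = n + 3 by ring] at h2
    have h3 := hrec (n + 3); rw [if_pos p3] at h3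
    simp only [show n + 3 - 1 = n + 2 by ring, show n + 3 + 1 = n + 4 by ring, pow_one] at h3
    have h4 := hrec (n + 4); rw [if_neg p4] at h4
    simp only [show n + 4 - 1 = n + 3 by ring, show n + 4 + 1 = n + 5 by ring] at h4
    have h5 := hrec (n + 5); rw [if_pos p5] at h5
    simp only [show n + 5 - 1 = n + 4 by ring, show n + 5 + 1 = n + 6 by ring, pow_one] at h5
    have E2 : x (n + 2) = (1 + x (n + 1)) / x n := by
      rw [eq_div_iff ha]; linear_combination h1
    have E3 : x (n + 3) = (x n + 1 + x (n + 1)) ^ 2 / (x n ^ 2 * x (n + 1)) := by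
      refine mul_left_cancel₀ hb ?_
      rw [h2, E2]; field_simp; ring
    have E4 : x (n + 4) = ((x n + 1) ^ 2 + x (n + 1)) / (x n * x (n + 1)) := by
      refine mul_left_cancel₀ (hne (n + 2)) ?_
      rw [h3, E2, E3]; field_simp; ring
    have E5 : x (n + 5) = (1 + x n) ^ 2 / x (n + 1) := by
      refine mul_left_cancel₀ (hne (n + 3)) ?_
      rw [h4, E3, E4]; field_simp; ring
    refine mul_left_cancel₀ (hne (n + 4)) ?_
    rw [h5, E4, E5]; field_simp; ring
end

section
/- Eight-periodicity of the G₂ exchange relations (equation (2.2) of the paper with {d₁,d₂} = {1,3}, finite type G₂): let F be a field and (x_n)_{n∈ℤ} a sequence of nonzero elements of F satisfying x_{n−1} · x_{n+1} = (1 + x_n)^{c_n} for every n ∈ ℤ, where c_n = 1 if n is even and c_n = 3 if n is odd. Then x_{n+8} = x_n for every n ∈ ℤ. -/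
/-- Main computation: for even `m`, the sequence returns to its initial values after 8 steps,
in both coordinates. -/
lemma G2_aux {F : Type*} [Field F] (x : ℤ → F)
    (hne : ∀ n : ℤ, x n ≠ 0)
    (hrec : ∀ n : ℤ, x (n - 1) * x (n + 1) = (1 + x n) ^ (if Even n then 1 else 3))
    (m : ℤ) (hm : Even m) : x (m + 8) = x m ∧ x (m + 9) = x (m + 1) := by
  obtain ⟨a, ha⟩ : ∃ c, c = x m := ⟨_, rfl⟩
  obtain ⟨b, hb⟩ : ∃ c, c = x (m + 1) := ⟨_, rfl⟩
  have ha0 : a ≠ 0 := ha ▸ hne m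
  have hb0 : b ≠ 0 := hb ▸ hne (m + 1)
  have podd : ∀ k : ℤ, ¬ Even k → (if Even (m + k) then 1 else 3) = 3 := by
    intro k hk; rw [if_neg]; simp [Int.even_add, hm, hk]
  have peven : ∀ k : ℤ, Even k → (if Even (m + k) then 1 else 3) = 1 := by
    intro k hk; rw [if_pos]; simp [Int.even_add, hm, hk]
  have r1 := hrec (m + 1)
  rw [podd 1 (by decide), show m + 1 - 1 = m by ring, show m + 1 + 1 = m + 2 by ring,
    ← ha, ← hb] at r1
  have r2 := hrec (m + 2)
  rw [peven 2 (by decide), show m + 2 - 1 = m + 1 by ring,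
    show m + 2 + 1 = m + 3 by ring, ← hb, pow_one] at r2
  have r3 := hrec (m + 3)
  rw [podd 3 (by decide), show m + 3 - 1 = m + 2 by ring,
    show m + 3 + 1 = m + 4 by ring] at r3
  have r4 := hrec (m + 4)
  rw [peven 4 (by decide), show m + 4 - 1 = m + 3 by ring,
    show m + 4 + 1 = m + 5 by ring, pow_one] at r4
  have r5 := hrec (m + 5)
  rw [podd 5 (by decide), show m + 5 - 1 = m + 4 by ring,
    show m + 5 + 1 = m + 6 by ring] at r5
  have r6 := hrec (m + 6)
  rw [peven 6 (by decide), show m + 6 - 1 = m + 5 by ring,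
    show m + 6 + 1 = m + 7 by ring, pow_one] at r6
  have r7 := hrec (m + 7)
  rw [podd 7 (by decide), show m + 7 - 1 = m + 6 by ring,
    show m + 7 + 1 = m + 8 by ring] at r7
  have r8 := hrec (m + 8)
  rw [peven 8 (by decide), show m + 8 - 1 = m + 7 by ring,
    show m + 8 + 1 = m + 9 by ring, pow_one] at r8
  -- closed forms (cleared of denominators)
  have E2 : x (m + 2) * a = (1 + b) ^ 3 := by linear_combination r1
  have n1 : (1 : F) + b ≠ 0 := by
    intro h
    have h3 : (1 + b) ^ 3 = 0 := by rw [h]; ring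
    exact mul_ne_zero (hne (m + 2)) ha0 (E2.trans h3)
  have E3 : x (m + 3) * (a * b) = a + (1 + b) ^ 3 := by
    linear_combination a * r2 + E2
  have n2 : a + (1 + b) ^ 3 ≠ 0 := by
    rw [← E3]; exact mul_ne_zero (hne (m + 3)) (mul_ne_zero ha0 hb0)
  have E4 : x (m + 4) * (a ^ 2 * b ^ 3) = (a + (1 + b) ^ 2) ^ 3 := by
    have key : (x (m + 4) * (a ^ 2 * b ^ 3)) * (a * (1 + b) ^ 3) =
        ((a + (1 + b) ^ 2) ^ 3) * (a * (1 + b) ^ 3) := by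
      linear_combination (a ^ 4 * b ^ 3) * r3 - (a ^ 3 * b ^ 3 * x (m + 4)) * E2 +
        (a * ((a * b + x (m + 3) * (a * b)) ^ 2 +
          (a * b + x (m + 3) * (a * b)) * (a * b + a + (1 + b) ^ 3) +
          (a * b + a + (1 + b) ^ 3) ^ 2)) * E3
    exact mul_right_cancel₀ (mul_ne_zero ha0 (pow_ne_zero 3 n1)) key
  have n4 : (a + (1 + b) ^ 2) ^ 3 ≠ 0 := by
    rw [← E4]
    exact mul_ne_zero (hne (m + 4)) (mul_ne_zero (pow_ne_zero 2 ha0) (pow_ne_zero 3 hb0))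
  have E5 : x (m + 5) * (a * b ^ 2) = a ^ 2 + 2 * a + 3 * a * b + (1 + b) ^ 3 := by
    have key : (x (m + 5) * (a * b ^ 2)) * (a + (1 + b) ^ 3) =
        (a ^ 2 + 2 * a + 3 * a * b + (1 + b) ^ 3) * (a + (1 + b) ^ 3) := by
      linear_combination (a ^ 2 * b ^ 3) * r4 + E4 - (a * b ^ 2 * x (m + 5)) * E3
    exact mul_right_cancel₀ n2 key
  have n5 : a ^ 2 + 2 * a + 3 * a * b + (1 + b) ^ 3 ≠ 0 := by
    rw [← E5]; exact mul_ne_zero (hne (m + 5)) (mul_ne_zero ha0 (pow_ne_zero 2 hb0))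
  have E6 : x (m + 6) * (a * b ^ 3) = (a + 1 + b) ^ 3 := by
    have key : (x (m + 6) * (a * b ^ 3)) * ((a + (1 + b) ^ 2) ^ 3) =
        ((a + 1 + b) ^ 3) * ((a + (1 + b) ^ 2) ^ 3) := by
      linear_combination (a ^ 3 * b ^ 6) * r5 - (a * b ^ 3 * x (m + 6)) * E4 +
        ((a * b ^ 2 + x (m + 5) * (a * b ^ 2)) ^ 2 +
          (a * b ^ 2 + x (m + 5) * (a * b ^ 2)) *
            (a * b ^ 2 + (a ^ 2 + 2 * a + 3 * a * b + (1 + b) ^ 3)) +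
          (a * b ^ 2 + (a ^ 2 + 2 * a + 3 * a * b + (1 + b) ^ 3)) ^ 2) * E5
    exact mul_right_cancel₀ n4 key
  have n6 : (a + 1 + b) ^ 3 ≠ 0 := by
    rw [← E6]; exact mul_ne_zero (hne (m + 6)) (mul_ne_zero ha0 (pow_ne_zero 3 hb0))
  have E7 : x (m + 7) * b = 1 + a := by
    have key : (x (m + 7) * b) * (a ^ 2 + 2 * a + 3 * a * b + (1 + b) ^ 3) =
        (1 + a) * (a ^ 2 + 2 * a + 3 * a * b + (1 + b) ^ 3) := by
      linear_combination (a * b ^ 3) * r6 + E6 - (b * x (m + 7)) * E5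
    exact mul_right_cancel₀ n5 key
  have n7 : (1 : F) + a ≠ 0 := by
    rw [← E7]; exact mul_ne_zero (hne (m + 7)) hb0
  have h8 : x (m + 8) = a := by
    have key : x (m + 8) * ((a + 1 + b) ^ 3) = a * ((a + 1 + b) ^ 3) := by
      linear_combination (a * b ^ 3) * r7 - x (m + 8) * E6 +
        (a * ((b + x (m + 7) * b) ^ 2 + (b + x (m + 7) * b) * (b + 1 + a) +
          (b + 1 + a) ^ 2)) * E7
    exact mul_right_cancel₀ n6 key
  refine ⟨ha ▸ h8, ?_⟩
  have key : x (m + 9) * (1 + a) = b * (1 + a) := by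
    linear_combination b * r8 - x (m + 9) * E7 + b * h8
  exact hb ▸ mul_right_cancel₀ n7 key

/-- Eight-periodicity of the G₂ exchange relations: if `(x_n)_{n∈ℤ}` is a sequence of
nonzero elements of a field `F` with `x_{n−1} · x_{n+1} = (1 + x_n)^{c_n}` for every `n`,
where `c_n = 1` for `n` even and `c_n = 3` for `n` odd, then `x_{n+8} = x n` for every `n`. -/
theorem G2_eight_periodicity {F : Type*} [Field F] (x : ℤ → F)
    (hne : ∀ n : ℤ, x n ≠ 0)
    (hrec : ∀ n : ℤ, x (n - 1) * x (n + 1) = (1 + x n) ^ (if Even n then 1 else 3)) :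
    ∀ n : ℤ, x (n + 8) = x n := by
  intro n
  rcases Int.even_or_odd n with he | ho
  · exact (G2_aux x hne hrec n he).1
  · have hm : Even (n - 1) := by
      rcases ho with ⟨k, hk⟩; exact ⟨k, by omega⟩
    have := (G2_aux x hne hrec (n - 1) hm).2
    rw [show n - 1 + 9 = n + 8 by ring, show n - 1 + 1 = n by ring] at this
    exact this
end
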